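/- Let Δ be a pure simplicial complex with dim Δ ≥ 2. Then Δ is locally a matroid if and only if Δ is a union of disjoint matroids (i.e. every connected component of Δ is a matroid, and distinct components share no vertices). -/

import Mathlib

open CategoryTheory Opposite

/-! ### Abstract simplicial complexes -/

/-- An abstract simplicial complex on the vertex set `Fin n`: a collection of finite
subsets (faces) closed under taking subsets. -/
structure SimComplex (n : ℕ) where
  faces : Set (Finset (Fin n))
  down_closed : ∀ ⦃F G : Finset (Fin n)⦄, F ∈ faces → G ⊆ F → G ∈ faces

namespace SimComplex

variable {n : ℕ}

/-- The vertex set of a simplicial complex. -/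
def vertexSet (Δ : SimComplex n) : Set (Fin n) := {v | ({v} : Finset (Fin n)) ∈ Δ.faces}

/-- The dimension of a simplicial complex: the maximal cardinality of a face, minus one. -/
noncomputable def dim (Δ : SimComplex n) : ℤ :=
  (Int.ofNat (sSup (Finset.card '' Δ.faces))) - 1

/-- A facet is a maximal face. -/
def IsFacet (Δ : SimComplex n) (F : Finset (Fin n)) : Prop :=
  F ∈ Δ.faces ∧ ∀ G ∈ Δ.faces, F ⊆ G → F = G

/-- A complex is pure if all facets have the same cardinality. -/
def Pure (Δ : SimComplex n) : Prop :=
  ∀ F G, Δ.IsFacet F → Δ.IsFacet G → F.card = G.card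

/-- A matroid: for any two faces `F`, `G` with `|F| > |G|` there is `i ∈ F ∖ G`
with `G ∪ {i}` a face. -/
def IsMatroid (Δ : SimComplex n) : Prop :=
  ∀ F G, F ∈ Δ.faces → G ∈ Δ.faces → G.card < F.card →
    ∃ i ∈ F, i ∉ G ∧ insert i G ∈ Δ.faces

/-- The link of a face `G`: `{F ∖ G : G ⊆ F ∈ Δ}`. -/
def link (Δ : SimComplex n) (G : Finset (Fin n)) : SimComplex n where
  faces := {F | Disjoint F G ∧ F ∪ G ∈ Δ.faces}
  down_closed := by
    intro F F' hF hsub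
    exact ⟨hF.1.mono_left hsub, Δ.down_closed hF.2 (Finset.union_subset_union hsub subset_rfl)⟩

/-- The star of a face `G`: `{F ∈ Δ : F ∪ G ∈ Δ}`. -/
def star (Δ : SimComplex n) (G : Finset (Fin n)) : SimComplex n where
  faces := {F | F ∈ Δ.faces ∧ F ∪ G ∈ Δ.faces}
  down_closed := by
    intro F F' hF hsub
    exact ⟨Δ.down_closed hF.1 hsub, Δ.down_closed hF.2 (Finset.union_subset_union hsub subset_rfl)⟩

/-- `Δ` is locally a matroid if the link of every vertex is a matroid. -/
def LocallyMatroid (Δ : SimComplex n) : Prop :=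
  ∀ v ∈ Δ.vertexSet, (Δ.link {v}).IsMatroid

/-- Two vertices are adjacent if they span a 1-dimensional face (an edge). -/
def Adj (Δ : SimComplex n) (u v : Fin n) : Prop :=
  u ≠ v ∧ ({u, v} : Finset (Fin n)) ∈ Δ.faces

/-- Two vertices are joined by a path of edges. -/
def Reach (Δ : SimComplex n) : Fin n → Fin n → Prop := Relation.ReflTransGen Δ.Adj

/-- A complex is connected if any two vertices are joined by a path of edges. -/
def Connected (Δ : SimComplex n) : Prop :=
  ∀ u ∈ Δ.vertexSet, ∀ v ∈ Δ.vertexSet, Δ.Reach u v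

/-- The induced subcomplex on a set `W` of vertices. -/
def induced (Δ : SimComplex n) (W : Set (Fin n)) : SimComplex n where
  faces := {F | F ∈ Δ.faces ∧ ↑F ⊆ W}
  down_closed := by
    intro F F' hF hsub
    exact ⟨Δ.down_closed hF.1 hsub, subset_trans (Finset.coe_subset.2 hsub) hF.2⟩

/-- The connected component of a vertex `v`, as an induced subcomplex. -/
def component (Δ : SimComplex n) (v : Fin n) : SimComplex n :=
  Δ.induced {u | Δ.Reach v u}

/-- A minimal nonface: a subset of the vertex set which is not a face, all of whose
proper subsets are faces. -/
def IsMinNonface (Δ : SimComplex n) (F : Finset (Fin n)) : Prop :=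
  ↑F ⊆ Δ.vertexSet ∧ F ∉ Δ.faces ∧ ∀ G ⊂ F, G ∈ Δ.faces

/-- A complete intersection complex: the minimal nonfaces are pairwise disjoint. -/
def IsCompleteIntersection (Δ : SimComplex n) : Prop :=
  ∀ F G, Δ.IsMinNonface F → Δ.IsMinNonface G → F ≠ G → Disjoint F G

/-- `Δ` is locally a complete intersection if the link of every vertex is one. -/
def LocallyCompleteIntersection (Δ : SimComplex n) : Prop :=
  ∀ v ∈ Δ.vertexSet, (Δ.link {v}).IsCompleteIntersection

/-- A path graph: vertices `f 0, …, f (k+1)` and edges exactly the consecutive pairs. -/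
def IsPathGraph (Δ : SimComplex n) : Prop :=
  ∃ (k : ℕ) (f : Fin (k + 2) → Fin n), Function.Injective f ∧
    Δ.vertexSet = Set.range f ∧
    ∀ e : Finset (Fin n), (e ∈ Δ.faces ∧ e.card = 2) ↔
      ∃ i : Fin (k + 1), e = {f i.castSucc, f i.succ}

/-- A cycle graph: vertices `f 0, …, f (k+2)` and edges exactly the cyclically
consecutive pairs. -/
def IsCycleGraph (Δ : SimComplex n) : Prop :=
  ∃ (k : ℕ) (f : Fin (k + 3) → Fin n), Function.Injective f ∧
    Δ.vertexSet = Set.range f ∧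
    ∀ e : Finset (Fin n), (e ∈ Δ.faces ∧ e.card = 2) ↔
      ∃ i : Fin (k + 3), e = {f i, f (i + 1)}

end SimComplex

/-! ### Commutative-algebra notions -/

noncomputable section

/-- The `i`-th Ext group of two modules over a commutative ring. -/
def ExtGroup (A : Type) [CommRing A] (i : ℕ) (M N : Type) [AddCommGroup M] [Module A M]
    [AddCommGroup N] [Module A N] : Type :=
  ((Ext A (ModuleCat A) i).obj (op (ModuleCat.of A M))).obj (ModuleCat.of A N)

/-- A local ring is Cohen–Macaulay if its depth equals its Krull dimension, i.e. if
`Ext^i(residue field, B)` vanishes for all `i < dim B`. -/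
def IsCohenMacaulayLocalRing (B : Type) [CommRing B] [IsLocalRing B] : Prop :=
  ∀ i : ℕ, (i : WithBot ℕ∞) < ringKrullDim B →
    Subsingleton (ExtGroup B i (B ⧸ IsLocalRing.maximalIdeal B) B)

/-- A commutative ring is Cohen–Macaulay if all its localizations at primes are
Cohen–Macaulay local rings. -/
def IsCohenMacaulayRing (A : Type) [CommRing A] : Prop :=
  ∀ (P : Ideal A) (hP : P.IsPrime),
    letI : P.IsPrime := hP
    IsCohenMacaulayLocalRing (Localization.AtPrime P)

/-- An ideal `I` of `A` is Cohen–Macaulay if `A ⧸ I` is a Cohen–Macaulay ring. -/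
def IsCohenMacaulayIdeal {A : Type} [CommRing A] (I : Ideal A) : Prop :=
  IsCohenMacaulayRing (A ⧸ I)

/-- The ideal `I` satisfies Serre's condition `(S₂)`: for every prime `P` of `A`, the
depth of the localized module `(A⧸I)_P` over `A_P` is at least `min {2, height P}`,
where the height of `P` is the Krull dimension of `A_P` and depth is detected by
vanishing of `Ext^i` from the residue field. -/
def SatisfiesS2 {A : Type} [CommRing A] (I : Ideal A) : Prop :=
  ∀ (P : Ideal A) (hP : P.IsPrime),
    letI : P.IsPrime := hP
    ∀ i : ℕ, (i : WithBot ℕ∞) < min 2 (ringKrullDim (Localization.AtPrime P)) →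
      Subsingleton (ExtGroup (Localization.AtPrime P) i
        (Localization.AtPrime P ⧸ IsLocalRing.maximalIdeal (Localization.AtPrime P))
        (LocalizedModule P.primeCompl (A ⧸ I)))

/-- The `m`-th symbolic power of an ideal: the intersection of the `m`-th powers of
its minimal primes. -/
def symbPowIdeal {A : Type} [CommRing A] (I : Ideal A) (m : ℕ) : Ideal A :=
  ⨅ P ∈ I.minimalPrimes, P ^ m

end

/-! ### Stanley–Reisner theory -/

noncomputable section

open MvPolynomial

/-- The squarefree monomial attached to a finite set of variables. -/
def faceMonomial (K : Type) [Field K] {n : ℕ} (F : Finset (Fin n)) : MvPolynomial (Fin n) K :=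
  ∏ i ∈ F, X i

/-- The Stanley–Reisner ideal of a complex on `[n]`: generated by the squarefree
monomials corresponding to nonfaces. -/
def SRIdeal (K : Type) [Field K] {n : ℕ} (Δ : SimComplex n) : Ideal (MvPolynomial (Fin n) K) :=
  Ideal.span {p | ∃ F : Finset (Fin n), F ∉ Δ.faces ∧ p = faceMonomial K F}

/-- The Stanley–Reisner ideal of a complex whose vertex set may be a proper subset of
`[n]`: generated by the squarefree monomials of nonfaces contained in the vertex set. -/
def SRIdealOn (K : Type) [Field K] {n : ℕ} (Δ : SimComplex n) : Ideal (MvPolynomial (Fin n) K) :=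
  Ideal.span {p | ∃ F : Finset (Fin n), ↑F ⊆ Δ.vertexSet ∧ F ∉ Δ.faces ∧ p = faceMonomial K F}

/-- The prime ideal generated by the variables indexed by `F`. -/
def PF (K : Type) [Field K] {n : ℕ} (F : Finset (Fin n)) : Ideal (MvPolynomial (Fin n) K) :=
  Ideal.span ((fun i => (X i : MvPolynomial (Fin n) K)) '' ↑F)

/-- The `m`-th symbolic power of the Stanley–Reisner ideal:
`I_Δ^{(m)} = ⋂_{F facet} P_{complement of F}^m`. -/
def SRSymbPow (K : Type) [Field K] {n : ℕ} (Δ : SimComplex n) (m : ℕ) :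
    Ideal (MvPolynomial (Fin n) K) :=
  ⨅ (F : Finset (Fin n)) (_ : Δ.IsFacet F), (PF K Fᶜ) ^ m

/-- The cover ideal `J(Δ) = ⋂_{F facet} P_F` and its symbolic powers. -/
def coverSymbPow (K : Type) [Field K] {n : ℕ} (Δ : SimComplex n) (m : ℕ) :
    Ideal (MvPolynomial (Fin n) K) :=
  ⨅ (F : Finset (Fin n)) (_ : Δ.IsFacet F), (PF K F) ^ m

/-- The graded maximal ideal `(x_1, …, x_n)`. -/
def maxIdeal (K : Type) [Field K] (n : ℕ) : Ideal (MvPolynomial (Fin n) K) :=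
  Ideal.span (Set.range X)

/-- The `i`-th local cohomology module of `S ⧸ I` with support in the maximal
graded ideal. -/
def locCoh (K : Type) [Field K] {n : ℕ} (i : ℕ) (I : Ideal (MvPolynomial (Fin n) K)) :
    ModuleCat (MvPolynomial (Fin n) K) :=
  (localCohomology (maxIdeal K n) i).obj
    (ModuleCat.of (MvPolynomial (Fin n) K) (MvPolynomial (Fin n) K ⧸ I))

/-- `I` is quasi-Buchsbaum: the maximal ideal annihilates all local cohomology modules
`H^i_m(S⧸I)` for `i < dim S⧸I`. -/
def IsQuasiBuchsbaum (K : Type) [Field K] {n : ℕ} (I : Ideal (MvPolynomial (Fin n) K)) : Prop :=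
  ∀ i : ℕ, (i : WithBot ℕ∞) < ringKrullDim (MvPolynomial (Fin n) K ⧸ I) →
    ∀ x ∈ maxIdeal K n, ∀ y : (locCoh K i I), x • y = 0

/-- `I` is Buchsbaum: for `i < dim S⧸I` the natural map
`Ext^i_S(S⧸m, S⧸I) → H^i_m(S⧸I)` (the structure map into the direct limit defining local
cohomology) is surjective. -/
def IsBuchsbaum (K : Type) [Field K] {n : ℕ} (I : Ideal (MvPolynomial (Fin n) K)) : Prop :=
  ∀ i : ℕ, (i : WithBot ℕ∞) < ringKrullDim (MvPolynomial (Fin n) K ⧸ I) →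
    letI := localCohomology.hasColimitDiagram
      (localCohomology.idealPowersDiagram (maxIdeal K n)) i
    Function.Surjective
      ((CategoryTheory.Limits.colimit.ι
          (localCohomology.diagram (localCohomology.idealPowersDiagram (maxIdeal K n)) i)
          (Opposite.op (Opposite.op (1 : ℕ)))).app
        (ModuleCat.of (MvPolynomial (Fin n) K) (MvPolynomial (Fin n) K ⧸ I)))

/-- `I` is generalized Cohen–Macaulay: the local cohomology modules `H^i_m(S⧸I)` are
finite-dimensional over `K` for `i < dim S⧸I`. -/
def IsGeneralizedCM (K : Type) [Field K] {n : ℕ} (I : Ideal (MvPolynomial (Fin n) K)) : Prop :=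
  ∀ i : ℕ, (i : WithBot ℕ∞) < ringKrullDim (MvPolynomial (Fin n) K ⧸ I) →
    Module.Finite K (RestrictScalars K (MvPolynomial (Fin n) K) (locCoh K i I))

end

/-! ### Monomial ideals -/

/-- A monomial ideal of `K[x_1,…,x_n]`. -/
def IsMonomialIdeal {K : Type} [Field K] {n : ℕ} (I : Ideal (MvPolynomial (Fin n) K)) : Prop :=
  ∃ S : Set (Fin n →₀ ℕ),
    I = Ideal.span {p | ∃ d ∈ S, p = MvPolynomial.monomial d (1 : K)}

/-- A squarefree monomial ideal of `K[x_1,…,x_n]`. -/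
def IsSquarefreeMonomialIdeal {K : Type} [Field K] {n : ℕ}
    (I : Ideal (MvPolynomial (Fin n) K)) : Prop :=
  ∃ S : Set (Finset (Fin n)),
    I = Ideal.span {p | ∃ F ∈ S, p = ∏ i ∈ F, (MvPolynomial.X i : MvPolynomial (Fin n) K)}
/-! A matroid is locally a matroid, and the link of a vertex only sees its component; this gives
one direction. Conversely, purity and `dim Δ ≥ 2` put every edge in a triangle, and a connected
complex with this property that is locally a matroid is a matroid. To augment `G` from a larger
face `F`: if they meet, augment in the link of a common vertex; if `|G| ≥ 2`, remove a vertex of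
`G`, augment by induction and finish by two exchanges through common vertices. For `G = {g}`
one needs `g` joined to an end of every edge `{x, y}`: two non-adjacent vertices with a common
neighbour `u` are parallel in the link of `u`, and with triangles this propagates along paths,
so a vertex non-adjacent to `x` in its component is adjacent to every neighbour of `x`. -/

namespace SimComplex

variable {n : ℕ} {Δ : SimComplex n}

@[ext]
theorem ext {Γ : SimComplex n} (h : Δ.faces = Γ.faces) : Δ = Γ := by
  cases Δ; cases Γ; congr

theorem mem_link_singleton {v : Fin n} {F : Finset (Fin n)} :
    F ∈ (Δ.link {v}).faces ↔ v ∉ F ∧ insert v F ∈ Δ.faces := by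
  simp [link]

theorem exists_isFacet_superset {F : Finset (Fin n)} (hF : F ∈ Δ.faces) :
    ∃ B, Δ.IsFacet B ∧ F ⊆ B := by
  obtain ⟨B, ⟨hB, hFB⟩, hmax⟩ := Set.Finite.exists_maximalFor Finset.card
    {G | G ∈ Δ.faces ∧ F ⊆ G} (Set.toFinite _) ⟨F, hF, subset_rfl⟩
  exact ⟨B, ⟨hB, fun G hG hBG => Finset.eq_of_subset_of_card_le hBG
    (hmax ⟨hG, hFB.trans hBG⟩ (Finset.card_le_card hBG))⟩, hFB⟩

theorem Adj.symm {u v : Fin n} (h : Δ.Adj u v) : Δ.Adj v u :=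
  ⟨h.1.symm, Finset.pair_comm u v ▸ h.2⟩

theorem Reach.symm {u v : Fin n} (h : Δ.Reach u v) : Δ.Reach v u := by
  induction h with
  | refl => exact .refl
  | tail _ hbc ih => exact ih.head hbc.symm

theorem reach_of_mem {F : Finset (Fin n)} (hF : F ∈ Δ.faces) {x y : Fin n} (hx : x ∈ F)
    (hy : y ∈ F) : Δ.Reach x y := by
  rcases eq_or_ne x y with rfl | hxy
  · exact .refl
  · exact .single ⟨hxy, Δ.down_closed hF (Finset.insert_subset hx (by simpa))⟩

theorem IsMatroid.link {M : SimComplex n} (hM : M.IsMatroid) (G : Finset (Fin n)) :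
    (M.link G).IsMatroid := by
  rintro F H ⟨hFG, hF⟩ ⟨hHG, hH⟩ hlt
  have hcard : (H ∪ G).card < (F ∪ G).card := by
    rw [Finset.card_union_of_disjoint hFG, Finset.card_union_of_disjoint hHG]; omega
  obtain ⟨i, hiFG, hiHG, hins⟩ := hM _ _ hF hH hcard
  have hiG : i ∉ G := fun h => hiHG (Finset.mem_union_right _ h)
  refine ⟨i, (Finset.mem_union.1 hiFG).resolve_right hiG,
    fun h => hiHG (Finset.mem_union_left _ h), ?_, by rwa [Finset.insert_union]⟩
  exact Finset.disjoint_insert_left.2 ⟨hiG, hHG⟩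

theorem IsMatroid.pair_mem_of_parallel {M : SimComplex n} (hM : M.IsMatroid) {x y w : Fin n}
    (hy : {y} ∈ M.faces) (hxy : {x, y} ∉ M.faces) (hxw : {x, w} ∈ M.faces) (hwx : w ≠ x) :
    {y, w} ∈ M.faces := by
  rcases eq_or_ne y w with rfl | hyw
  · simpa using hy
  obtain ⟨i, hi, -, hins⟩ := hM {x, w} {y} hxw hy (by simp [Finset.card_pair hwx.symm])
  rcases Finset.mem_insert.1 hi with rfl | hi
  · exact absurd hins hxy
  · rwa [Finset.mem_singleton.1 hi, Finset.pair_comm] at hins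

theorem mem_component_of_reach {v u : Fin n} (hvu : Δ.Reach v u) {F : Finset (Fin n)}
    (hF : F ∈ Δ.faces) (huF : u ∈ F) : F ∈ (Δ.component v).faces :=
  ⟨hF, fun _ hx => hvu.trans (reach_of_mem hF huF hx)⟩

theorem link_component {v u : Fin n} (hvu : Δ.Reach v u) :
    (Δ.component v).link {u} = Δ.link {u} := by
  ext F
  exact ⟨fun ⟨hdisj, hF⟩ => ⟨hdisj, hF.1⟩, fun ⟨hdisj, hF⟩ =>
    ⟨hdisj, mem_component_of_reach hvu hF
      (Finset.mem_union_right _ (Finset.mem_singleton_self u))⟩⟩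

theorem reach_component_of_reach {v u : Fin n} (hvu : Δ.Reach v u) :
    (Δ.component v).Reach v u := by
  induction hvu with
  | refl => exact .refl
  | tail hvq hqc ih =>
    exact ih.tail ⟨hqc.1, mem_component_of_reach hvq hqc.2 (Finset.mem_insert_self _ _)⟩

theorem connected_component (v : Fin n) : (Δ.component v).Connected := by
  intro x ⟨_, hx⟩ y ⟨_, hy⟩
  exact (reach_component_of_reach (hx (Finset.mem_singleton_self x))).symm.trans
    (reach_component_of_reach (hy (Finset.mem_singleton_self y)))

theorem LocallyMatroid.component (hloc : Δ.LocallyMatroid) (v : Fin n) :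
    (Δ.component v).LocallyMatroid := by
  intro u ⟨hu, hvu⟩
  rw [link_component (hvu (Finset.mem_singleton_self u))]
  exact hloc u hu

def EdgesInTriangles (Δ : SimComplex n) : Prop :=
  ∀ ⦃u a⦄, Δ.Adj u a →
    ∃ w, w ≠ u ∧ w ≠ a ∧ ({u, a, w} : Finset (Fin n)) ∈ Δ.faces

theorem EdgesInTriangles.component (htri : Δ.EdgesInTriangles) (v : Fin n) :
    (Δ.component v).EdgesInTriangles := by
  intro u a ⟨hua, hF, hreach⟩
  obtain ⟨w, hwu, hwa, hT⟩ := htri ⟨hua, hF⟩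
  exact ⟨w, hwu, hwa, mem_component_of_reach (hreach (Finset.mem_insert_self u _)) hT
    (Finset.mem_insert_self u _)⟩

theorem exists_three_le_card_of_two_le_dim (hdim : 2 ≤ Δ.dim) :
    ∃ F ∈ Δ.faces, 3 ≤ F.card := by
  by_contra! h
  have hsup : sSup (Finset.card '' Δ.faces) ≤ 2 :=
    csSup_le' (by rintro _ ⟨F, hF, rfl⟩; exact Nat.le_of_lt_succ (h F hF))
  simp only [dim, Int.ofNat_eq_natCast] at hdim
  omega

theorem Pure.edgesInTriangles (hpure : Δ.Pure) (hdim : 2 ≤ Δ.dim) : Δ.EdgesInTriangles := by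
  obtain ⟨F, hF, hF3⟩ := exists_three_le_card_of_two_le_dim hdim
  obtain ⟨B₀, hB₀, hFB₀⟩ := exists_isFacet_superset hF
  intro u a hua
  obtain ⟨B, hB, huaB⟩ := exists_isFacet_superset hua.2
  have hcard : ({u, a} : Finset (Fin n)).card < B.card := by
    rw [Finset.card_pair hua.1, hpure B B₀ hB hB₀]
    exact lt_of_lt_of_le (by omega) (hF3.trans (Finset.card_le_card hFB₀))
  obtain ⟨w, hwB, hw⟩ := Finset.exists_mem_notMem_of_card_lt_card hcard
  simp only [Finset.mem_insert, Finset.mem_singleton, not_or] at hw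
  exact ⟨w, hw.1, hw.2, Δ.down_closed hB.1 <| Finset.insert_subset (huaB (by simp)) <|
    Finset.insert_subset (huaB (by simp)) (Finset.singleton_subset_iff.2 hwB)⟩

namespace LocallyMatroid

theorem triple_mem_of_parallel (hloc : Δ.LocallyMatroid) {u x y w : Fin n}
    (huy : {u, y} ∈ Δ.faces) (huxy : {u, x, y} ∉ Δ.faces) (huxw : {u, x, w} ∈ Δ.faces)
    (hyu : y ≠ u) (hwu : w ≠ u) (hwx : w ≠ x) : {u, y, w} ∈ Δ.faces := by
  have hxu : x ≠ u := by rintro rfl; exact huxy (by simpa using huy)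
  have hM := hloc u (Δ.down_closed huy (by simp))
  have hyw := hM.pair_mem_of_parallel (x := x)
    (mem_link_singleton.2 ⟨by simpa using hyu.symm, huy⟩)
    (fun h => huxy (mem_link_singleton.1 h).2)
    (mem_link_singleton.2 ⟨by simp [hxu.symm, hwu.symm], huxw⟩) hwx
  exact (mem_link_singleton.1 hyw).2

/-- `v` and `a` are parallel in the link of `u`, so `v` is joined to the third vertex of every
triangle on `u a`. If `{u, a, b}` is not a face, pick such a triangle `{u, a, w}`: parallel
transport in the link of `a` gives `{a, b, w}`, and then in the link of `w` a non-face `{v, b}`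
would make `{v, a}` a face. -/
theorem pair_mem_of_adj_of_adj (hloc : Δ.LocallyMatroid) (htri : Δ.EdgesInTriangles)
    {v u a b : Fin n} (hvu : Δ.Adj v u) (hua : Δ.Adj u a) (hva : {v, a} ∉ Δ.faces)
    (hab : Δ.Adj a b) : {v, b} ∈ Δ.faces := by
  have hvw : ∀ w, w ≠ u → w ≠ a → {u, a, w} ∈ Δ.faces → {v, w} ∈ Δ.faces :=
    fun w hwu hwa h =>
      Δ.down_closed (hloc.triple_mem_of_parallel hvu.symm.2
        (fun h' => hva (Δ.down_closed h' (by simp [Finset.insert_subset_iff]))) h hvu.1 hwu hwa)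
        (Finset.subset_insert _ _)
  rcases eq_or_ne b u with rfl | hbu
  · exact hvu.2
  by_cases huab : {u, a, b} ∈ Δ.faces
  · exact hvw b hbu hab.1.symm huab
  obtain ⟨w, hwu, hwa, huaw⟩ := htri hua
  have habw : {a, b, w} ∈ Δ.faces := hloc.triple_mem_of_parallel hab.2
    (by rwa [Finset.insert_comm]) (by rwa [Finset.insert_comm]) hab.1.symm hwa hwu
  have hwv : {w, v} ∈ Δ.faces := Finset.pair_comm v w ▸ hvw w hwu hwa huaw
  have hvw_ne : v ≠ w := by
    rintro rfl; exact hva (Δ.down_closed huaw (by simp [Finset.insert_subset_iff]))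
  by_contra hvb
  refine hva (Δ.down_closed (hloc.triple_mem_of_parallel (x := b) hwv
    (fun h => hvb (Δ.down_closed h (by simp [Finset.insert_subset_iff]))) ?_ hvw_ne hwa.symm hab.1)
    (Finset.subset_insert _ _))
  exact Δ.down_closed habw (by simp [Finset.insert_subset_iff])

theorem pair_mem_of_reach (hloc : Δ.LocallyMatroid) (htri : Δ.EdgesInTriangles)
    {v a b : Fin n} (hva : Δ.Reach v a) (hnot : {v, a} ∉ Δ.faces) (hab : Δ.Adj a b) :
    {v, b} ∈ Δ.faces := by
  induction hva generalizing b with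
  | refl =>
    exact absurd (Δ.down_closed hab.2 (Finset.singleton_subset_iff.2 (Finset.mem_insert_self _ _)))
      (by simpa using hnot)
  | @tail q c _ hqc ih =>
    by_cases hvq : {v, q} ∈ Δ.faces
    · rcases eq_or_ne v q with rfl | hvq_ne
      · exact absurd hqc.2 hnot
      · exact hloc.pair_mem_of_adj_of_adj htri ⟨hvq_ne, hvq⟩ hqc hnot hab
    · exact absurd (ih hvq hqc) hnot

theorem exists_insert_mem_of_mem_of_mem (hloc : Δ.LocallyMatroid) {F G : Finset (Fin n)}
    {v : Fin n} (hF : F ∈ Δ.faces) (hG : G ∈ Δ.faces) (hvF : v ∈ F) (hvG : v ∈ G)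
    (hlt : G.card < F.card) : ∃ i ∈ F, i ∉ G ∧ insert i G ∈ Δ.faces := by
  have hmem {H : Finset (Fin n)} (hH : H ∈ Δ.faces) (hvH : v ∈ H) :
      H.erase v ∈ (Δ.link {v}).faces :=
    mem_link_singleton.2 ⟨Finset.notMem_erase v H, by rwa [Finset.insert_erase hvH]⟩
  have hcard : (G.erase v).card < (F.erase v).card := by
    rw [Finset.card_erase_of_mem hvF, Finset.card_erase_of_mem hvG]
    have := Finset.card_pos.2 ⟨v, hvG⟩
    omega
  obtain ⟨i, hi, hiG, hins⟩ :=
    hloc v (Δ.down_closed hG (by simpa)) _ _ (hmem hF hvF) (hmem hG hvG) hcard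
  have hiv : i ≠ v := Finset.ne_of_mem_erase hi
  refine ⟨i, Finset.mem_of_mem_erase hi, fun h => hiG (Finset.mem_erase.2 ⟨hiv, h⟩), ?_⟩
  have := (mem_link_singleton.1 hins).2
  rwa [Finset.insert_comm, Finset.insert_erase hvG] at this

theorem exists_insert_mem_of_exists_insert_erase_mem (hloc : Δ.LocallyMatroid)
    {G F : Finset (Fin n)} {u : Fin n} (hG : G ∈ Δ.faces) (hF : F ∈ Δ.faces) (huG : u ∈ G)
    (hGu : (G.erase u).Nonempty) (hlt : G.card < F.card)
    (h : ∃ i ∈ F, i ∉ G.erase u ∧ insert i (G.erase u) ∈ Δ.faces) :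
    ∃ i ∈ F, i ∉ G ∧ insert i G ∈ Δ.faces := by
  obtain ⟨i, hiF, hiG', hG₁⟩ := h
  have hcard₁ : (insert i (G.erase u)).card = G.card := by
    rw [Finset.card_insert_of_notMem hiG', Finset.card_erase_add_one huG]
  obtain ⟨j, hjF, hjG₁, hG₂⟩ := hloc.exists_insert_mem_of_mem_of_mem hF hG₁ hiF
    (Finset.mem_insert_self _ _) (by omega)
  obtain ⟨w, hw⟩ := hGu
  obtain ⟨k, hkG₂, hkG, hins⟩ := hloc.exists_insert_mem_of_mem_of_mem hG₂ hG (by simp [hw])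
    (Finset.mem_of_mem_erase hw) (by rw [Finset.card_insert_of_notMem hjG₁]; omega)
  refine ⟨k, ?_, hkG, hins⟩
  rcases Finset.mem_insert.1 hkG₂ with rfl | hk
  · exact hjF
  rcases Finset.mem_insert.1 hk with rfl | hk
  · exact hiF
  · exact absurd (Finset.mem_of_mem_erase hk) hkG

theorem isMatroid (hloc : Δ.LocallyMatroid) (htri : Δ.EdgesInTriangles)
    (hconn : Δ.Connected) : Δ.IsMatroid := by
  intro F G hF hG hlt
  induction G using Finset.strongInduction with
  | H G ih =>
  by_cases hFG : ¬Disjoint F G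
  · obtain ⟨v, hvF, hvG⟩ := Finset.not_disjoint_iff.1 hFG
    exact hloc.exists_insert_mem_of_mem_of_mem hF hG hvF hvG hlt
  rw [not_not] at hFG
  rcases G.eq_empty_or_nonempty with rfl | ⟨u, huG⟩
  · obtain ⟨x, hx⟩ := Finset.card_pos.1 hlt
    exact ⟨x, hx, Finset.notMem_empty x, Δ.down_closed hF (by simpa)⟩
  rcases (G.erase u).eq_empty_or_nonempty with hGu | hGu
  · obtain rfl : G = {u} := (Finset.erase_eq_empty_iff G u).1 hGu |>.resolve_left
      (Finset.ne_empty_of_mem huG)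
    obtain ⟨x, hxF, y, hyF, hxy⟩ := Finset.one_lt_card.1 (by simpa using hlt)
    have hu : u ∉ F := Finset.disjoint_singleton_right.1 hFG
    have hxyF : {x, y} ∈ Δ.faces := Δ.down_closed hF (by simp [Finset.insert_subset_iff, *])
    by_cases hux : {u, x} ∈ Δ.faces
    · exact ⟨x, hxF, by simpa using (ne_of_mem_of_not_mem hxF hu), by rwa [Finset.pair_comm]⟩
    · refine ⟨y, hyF, by simpa using (ne_of_mem_of_not_mem hyF hu), ?_⟩
      rw [Finset.pair_comm]
      exact hloc.pair_mem_of_reach htri (hconn u hG x (Δ.down_closed hF (by simpa))) hux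
        ⟨hxy, hxyF⟩
  · exact hloc.exists_insert_mem_of_exists_insert_erase_mem hG hF huG hGu hlt <|
      ih _ (Finset.erase_ssubset huG) (Δ.down_closed hG (Finset.erase_subset u G))
        (lt_of_le_of_lt (Finset.card_le_card (Finset.erase_subset u G)) hlt)

end LocallyMatroid

end SimComplex

/-- **Corollary.** A pure simplicial complex of dimension at least 2 is locally a matroid
if and only if every connected component of it is a matroid (distinct components being
automatically vertex-disjoint). -/
theorem pure_locally_matroid_iff_components_matroid {n : ℕ} (Δ : SimComplex n)
    (hpure : Δ.Pure) (hdim : 2 ≤ Δ.dim) :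
    Δ.LocallyMatroid ↔ ∀ v ∈ Δ.vertexSet, (Δ.component v).IsMatroid := by
  constructor
  · intro hloc v _
    exact (hloc.component v).isMatroid ((hpure.edgesInTriangles hdim).component v)
      (SimComplex.connected_component v)
  · intro hcomp u hu
    rw [← SimComplex.link_component .refl]
    exact (hcomp u hu).link {u}
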